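/- Let R = ℂ[x,y,z,w]/(x³+y³+z³+w³) with its standard grading, and let E : R → R be the Euler derivation, i.e., the unique ℂ-linear derivation of R sending the images of x, y, z, w to themselves respectively (equivalently, E(r) = d·r for every homogeneous r ∈ R_d). Then every ℂ-linear derivation δ : R → R that is homogeneous of degree 0 (i.e., δ(R_d) ⊆ R_d for all d) is a ℂ-scalar multiple of E. -/

import Mathlib

open MvPolynomial

/-- A `k`-linear map `δ : R → R` is a differential operator of order at most `n`:
order `≤ 0` means `δ (r * s) = r * δ s` for all `r s`, and order `≤ n + 1` means all
commutators `[δ, μ_r]` with multiplication operators have order `≤ n`. -/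
def IsDiffOpOfOrder (k : Type*) {R : Type*} [CommRing k] [CommRing R] [Algebra k R] :
    ℕ → (R →ₗ[k] R) → Prop
  | 0 => fun δ => ∀ r s : R, δ (r * s) = r * δ s
  | n + 1 => fun δ => ∀ r : R,
      IsDiffOpOfOrder k n (δ ∘ₗ LinearMap.mulLeft k r - LinearMap.mulLeft k r ∘ₗ δ)

/-- `δ` is homogeneous of degree `e ∈ ℤ` with respect to the grading `𝒜`: it sends
elements of degree `d` to elements of degree `d + e`, interpreted as `0` when `d + e < 0`. -/
def HomogeneousOfDegree {k R : Type*} [CommRing k] [CommRing R] [Algebra k R]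
    (𝒜 : ℕ → Submodule k R) (δ : R →ₗ[k] R) (e : ℤ) : Prop :=
  ∀ (d : ℕ), ∀ r ∈ 𝒜 d,
    (∀ m : ℕ, (m : ℤ) = (d : ℤ) + e → δ r ∈ 𝒜 m) ∧ ((d : ℤ) + e < 0 → δ r = 0)

/-- The grading induced on a quotient of a polynomial ring by a (homogeneous) ideal:
the degree-`d` piece is the image of the degree-`d` homogeneous polynomials. -/
noncomputable def quotGrade {σ : Type*} (k : Type*) [CommRing k]
    (I : Ideal (MvPolynomial σ k)) (d : ℕ) : Submodule k (MvPolynomial σ k ⧸ I) :=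
  (MvPolynomial.homogeneousSubmodule σ k d).map (Ideal.Quotient.mkₐ k I).toLinearMap

/-- The Fermat cubic cone. -/
noncomputable def cubicIdeal : Ideal (MvPolynomial (Fin 4) ℂ) :=
  Ideal.span {X 0 ^ 3 + X 1 ^ 3 + X 2 ^ 3 + X 3 ^ 3}

/-- `R = ℂ[x,y,z,w]/(x³+y³+z³+w³)`. -/
abbrev RCubic : Type := MvPolynomial (Fin 4) ℂ ⧸ cubicIdeal

/-!
A derivation `δ` of degree `0` preserves the span of the variables, say `δ xᵢ = ∑ⱼ aᵢⱼ xⱼ`.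
Applying `δ` to the relation `∑ xᵢ³ = 0` puts the cubic `∑ᵢ xᵢ² ∑ⱼ aᵢⱼ xⱼ` into the ideal
`(∑ xᵢ³)`, so by degree it equals `c ∑ xᵢ³` for a scalar `c`; comparing the coefficients of
the distinct monomials `xᵢ² xⱼ` gives `aᵢᵢ = c` and `aᵢⱼ = 0` for `i ≠ j`. Thus `δ` and `c E`
are derivations that agree on the variables, and by Euler's identity both act on `R_d` as
multiplication by `c d`.
-/

namespace MvPolynomial

variable {σ R : Type*} [CommSemiring R]

theorem IsHomogeneous.homogeneousComponent_add_mul {f : MvPolynomial σ R} {n : ℕ}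
    (hf : f.IsHomogeneous n) (g : MvPolynomial σ R) (m : ℕ) :
    homogeneousComponent (m + n) (g * f) = homogeneousComponent m g * f := by
  conv_lhs => rw [← sum_homogeneousComponent g, Finset.sum_mul, map_sum]
  have hk : ∀ k, homogeneousComponent (m + n) (homogeneousComponent k g * f) =
      if m = k then homogeneousComponent k g * f else 0 := fun k => by
    rw [homogeneousComponent_of_mem ((homogeneousComponent_isHomogeneous k g).mul hf)]
    simp only [add_left_inj]
  simp only [hk, Finset.sum_ite_eq, Finset.mem_range, ite_eq_left_iff, not_lt]
  intro hm
  rw [homogeneousComponent_eq_zero _ _ (by omega), zero_mul]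

theorem IsHomogeneous.exists_eq_C_mul_of_mem_span_singleton {P f : MvPolynomial σ R} {n : ℕ}
    (hP : P.IsHomogeneous n) (hf : f.IsHomogeneous n) (hmem : P ∈ Ideal.span {f}) :
    ∃ c : R, P = C c * f := by
  obtain ⟨g, rfl⟩ := Ideal.mem_span_singleton'.mp hmem
  refine ⟨coeff 0 g, ?_⟩
  rw [← homogeneousComponent_zero, ← hf.homogeneousComponent_add_mul, zero_add,
    homogeneousComponent_of_mem hP, if_pos rfl]

theorem single_two_add_single_one_inj {k l i j : σ} :
    Finsupp.single k 2 + Finsupp.single l 1 = Finsupp.single i 2 + Finsupp.single j 1 ↔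
      k = i ∧ l = j := by
  classical
  refine ⟨fun h => ?_, fun ⟨hki, hlj⟩ => hki ▸ hlj ▸ rfl⟩
  have hki : k = i := by
    by_contra hne
    have := DFunLike.congr_fun h k
    simp only [Finsupp.add_apply, Finsupp.single_apply, if_neg (Ne.symm hne)] at this
    split_ifs at this <;> omega
  subst hki
  rw [add_right_inj, Finsupp.single_left_inj one_ne_zero] at h
  exact ⟨rfl, h⟩

theorem X_sq_mul_C_mul_X (i j : σ) (r : R) :
    X i ^ 2 * (C r * X j) = monomial (Finsupp.single i 2 + Finsupp.single j 1) r := by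
  rw [X_pow_eq_monomial, X, C_mul_monomial, monomial_mul, one_mul, mul_one]

theorem eq_ite_of_sum_X_sq_mul_eq_C_mul_sum_X_pow_three [Fintype σ] [DecidableEq σ]
    {a : σ → σ → R} {c : R}
    (h : ∑ k, X k ^ 2 * ∑ l, C (a k l) * X l = C c * ∑ k, X k ^ 3) (i j : σ) :
    a i j = if i = j then c else 0 := by
  have hcube : ∀ k : σ, (X k ^ 3 : MvPolynomial σ R) = X k ^ 2 * (C 1 * X k) := fun k => by
    rw [C_1, one_mul, pow_succ]
  simp only [hcube, X_sq_mul_C_mul_X, Finset.mul_sum] at h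
  have := congrArg (coeff (Finsupp.single i 2 + Finsupp.single j 1)) h
  simp only [coeff_sum, coeff_C_mul, coeff_monomial] at this
  simpa [single_two_add_single_one_inj, ite_and] using this

noncomputable def eulerDerivation : Derivation R (MvPolynomial σ R) (MvPolynomial σ R) :=
  mkDerivation R X

@[simp]
theorem eulerDerivation_X (i : σ) : eulerDerivation (X i : MvPolynomial σ R) = X i :=
  mkDerivation_X R X i

theorem eulerDerivation_apply [Fintype σ] (φ : MvPolynomial σ R) :
    eulerDerivation φ = ∑ i, X i * pderiv i φ := by
  classical
  have : (eulerDerivation : Derivation R (MvPolynomial σ R) (MvPolynomial σ R)) =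
      ∑ i, (X i : MvPolynomial σ R) • pderiv i :=
    derivation_ext fun j => by
      rw [eulerDerivation_X, ← Derivation.coeFnAddMonoidHom_apply, map_sum, Finset.sum_apply]
      simp [Derivation.coeFnAddMonoidHom_apply, pderiv_X, Pi.single_apply]
  rw [this, ← Derivation.coeFnAddMonoidHom_apply, map_sum, Finset.sum_apply]
  simp only [Derivation.coeFnAddMonoidHom_apply, Derivation.smul_apply, smul_eq_mul]

theorem IsHomogeneous.eulerDerivation_eq [Fintype σ] {φ : MvPolynomial σ R} {n : ℕ}
    (h : φ.IsHomogeneous n) : eulerDerivation φ = n • φ := by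
  rw [eulerDerivation_apply, h.sum_X_mul_pderiv]

end MvPolynomial

section QuotientGrading

variable {σ k : Type*} [CommRing k] {I : Ideal (MvPolynomial σ k)}

theorem mk_mem_quotGrade {p : MvPolynomial σ k} {d : ℕ} (hp : p.IsHomogeneous d) :
    Ideal.Quotient.mk I p ∈ quotGrade k I d :=
  ⟨p, hp, rfl⟩

theorem quotGrade_one_eq_span :
    quotGrade k I 1 = Submodule.span k (Set.range fun i => Ideal.Quotient.mk I (X i)) := by
  rw [quotGrade, homogeneousSubmodule_one_eq_span_X, Submodule.map_span, ← Set.range_comp]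
  rfl

theorem quotGrade_ext {M : Type*} [AddCommGroup M] [Module k M]
    {f g : (MvPolynomial σ k ⧸ I) →ₗ[k] M} (h : ∀ d, ∀ r ∈ quotGrade k I d, f r = g r) :
    f = g := by
  refine LinearMap.ext fun r => ?_
  obtain ⟨p, rfl⟩ := Ideal.Quotient.mk_surjective r
  rw [← sum_homogeneousComponent p, map_sum, map_sum, map_sum]
  exact Finset.sum_congr rfl fun d _ =>
    h d _ (mk_mem_quotGrade (homogeneousComponent_isHomogeneous d p))

theorem Derivation.apply_eq_smul_of_mem_quotGrade [Fintype σ]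
    (D : Derivation k (MvPolynomial σ k ⧸ I) (MvPolynomial σ k ⧸ I)) {c : k}
    (hX : ∀ i, D (Ideal.Quotient.mk I (X i)) = c • Ideal.Quotient.mk I (X i))
    {d : ℕ} {r : MvPolynomial σ k ⧸ I} (hr : r ∈ quotGrade k I d) : D r = c • (d : k) • r := by
  have hD : D.compAlgebraMap (MvPolynomial σ k) =
      c • (Algebra.linearMap (MvPolynomial σ k) (MvPolynomial σ k ⧸ I)).compDer
        eulerDerivation :=
    derivation_ext fun i => by simpa using hX i
  obtain ⟨p, hp, rfl⟩ := hr
  have := congrArg (· p) hD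
  simpa [hp.eulerDerivation_eq, Nat.cast_smul_eq_nsmul, nsmul_eq_mul] using this

end QuotientGrading

theorem cubicIdeal_eq_span_sum : cubicIdeal = Ideal.span {∑ k : Fin 4, X k ^ 3} := by
  rw [Fin.sum_univ_four]
  rfl

theorem sum_X_sq_mul_mem_cubicIdeal (D : Derivation ℂ RCubic RCubic) {a : Fin 4 → Fin 4 → ℂ}
    (ha : ∀ i, D (Ideal.Quotient.mk cubicIdeal (X i)) =
      ∑ j, a i j • Ideal.Quotient.mk cubicIdeal (X j)) :
    ∑ k, X k ^ 2 * ∑ l, C (a k l) * X l ∈ cubicIdeal := by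
  have hC : ∀ r, Ideal.Quotient.mk cubicIdeal (C r) = algebraMap ℂ RCubic r := fun _ => rfl
  have hrel : ∑ k, Ideal.Quotient.mk cubicIdeal (X k) ^ 3 = 0 := by
    simp [← map_pow, ← map_sum, Ideal.Quotient.eq_zero_iff_mem, cubicIdeal_eq_span_sum]
  have h3 : (3 : ℂ) • Ideal.Quotient.mk cubicIdeal (∑ k, X k ^ 2 * ∑ l, C (a k l) * X l) = 0 := by
    rw [← map_zero D, ← hrel]
    simp [ha, hC, ← Algebra.smul_def, Derivation.leibniz_pow, Finset.smul_sum,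
      ofNat_smul_eq_nsmul (R := ℂ), nsmul_eq_mul]
  rw [← Ideal.Quotient.eq_zero_iff_mem]
  exact (smul_eq_zero.mp h3).resolve_left three_ne_zero

theorem exists_derivation_apply_mk_X_eq_smul (D : Derivation ℂ RCubic RCubic)
    (hD : ∀ r ∈ quotGrade ℂ cubicIdeal 1, D r ∈ quotGrade ℂ cubicIdeal 1) :
    ∃ c : ℂ, ∀ i, D (Ideal.Quotient.mk cubicIdeal (X i)) =
      c • Ideal.Quotient.mk cubicIdeal (X i) := by
  have hlin : ∀ i, ∃ a : Fin 4 → ℂ,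
      D (Ideal.Quotient.mk cubicIdeal (X i)) = ∑ j, a j • Ideal.Quotient.mk cubicIdeal (X j) :=
    fun i => by
      rw [quotGrade_one_eq_span] at hD
      exact ((Submodule.mem_span_range_iff_exists_fun ℂ).mp
        (hD _ (Submodule.subset_span ⟨i, rfl⟩))).imp fun _ => Eq.symm
  choose a ha using hlin
  have hhom : (∑ k, X k ^ 2 * ∑ l, C (a k l) * X l : MvPolynomial (Fin 4) ℂ).IsHomogeneous 3 :=
    IsHomogeneous.sum _ _ _ fun k _ => (isHomogeneous_X_pow k 2).mul
      (IsHomogeneous.sum _ _ _ fun l _ => isHomogeneous_C_mul_X (a k l) l)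
  have hmem := sum_X_sq_mul_mem_cubicIdeal D ha
  rw [cubicIdeal_eq_span_sum] at hmem
  obtain ⟨c, hc⟩ := hhom.exists_eq_C_mul_of_mem_span_singleton
    (IsHomogeneous.sum _ _ _ fun k _ => isHomogeneous_X_pow k 3) hmem
  refine ⟨c, fun i => ?_⟩
  simp [ha, eq_ite_of_sum_X_sq_mul_eq_C_mul_sum_X_pow_three hc]

/-- let `E` be the Euler derivation of `R = ℂ[x,y,z,w]/(x³+y³+z³+w³)`,
characterized by `E r = d • r` for homogeneous `r` of degree `d`.  Then every ℂ-linear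
derivation of `R` that is homogeneous of degree `0` is a ℂ-scalar multiple of `E`. -/
theorem degree_zero_derivations_are_multiples_of_euler
    (E : RCubic →ₗ[ℂ] RCubic)
    (hE : ∀ d : ℕ, ∀ r ∈ quotGrade ℂ cubicIdeal d, E r = (d : ℂ) • r)
    (δ : RCubic →ₗ[ℂ] RCubic)
    (hleib : ∀ r s : RCubic, δ (r * s) = r * δ s + s * δ r)
    (hhom : ∀ d : ℕ, ∀ r ∈ quotGrade ℂ cubicIdeal d, δ r ∈ quotGrade ℂ cubicIdeal d) :
    ∃ c : ℂ, δ = c • E := by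
  let D : Derivation ℂ RCubic RCubic := Derivation.mk' δ hleib
  obtain ⟨c, hc⟩ := exists_derivation_apply_mk_X_eq_smul D (hhom 1)
  refine ⟨c, quotGrade_ext fun d r hr => ?_⟩
  rw [LinearMap.smul_apply, hE d r hr]
  exact D.apply_eq_smul_of_mem_quotGrade hc hr
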